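/- arXiv:1711.07310 — 9 statements merged into one kernel-verified Lean document; each statement's English description precedes it below -/
import Mathlib

section
/- In a cooperative game (N,v), a player i is a dummy (i.e., v(S ∪ {i}) = v(S) for all S ⊆ N\{i}) if and only if v({i}) = 0 and i depends on no other player (D(i) = ∅). -/
/-! If adding any other player `j` never changes the marginal contribution of `i`, then adding the
members of a coalition one at a time shows that `i` contributes to every coalition what she
contributes to `∅`, namely `v {i} - v ∅`. -/

open Finset in
theorem marginal_eq_marginal_empty {α : Type*} [DecidableEq α] {v : Finset α → ℝ} {i : α}
    {T : Finset α}
    (h : ∀ j ∈ T, ∀ S ⊆ T.erase j,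
      v (insert i (insert j S)) - v (insert j S) = v (insert i S) - v S) :
    ∀ S ⊆ T, v (insert i S) - v S = v {i} - v ∅ := by
  intro S
  induction S using Finset.induction_on with
  | empty => intro _; rfl
  | insert j S hjS ih =>
    intro hS
    have hjT : j ∈ T := hS (mem_insert_self j S)
    have hST : S ⊆ T := (subset_insert j S).trans hS
    rw [h j hjT S (subset_erase.2 ⟨hST, hjS⟩), ih hST]

namespace Finset

theorem sdiff_pair_eq_erase_erase {α : Type*} [DecidableEq α] (N : Finset α) (i j : α) :
    N \ {i, j} = (N.erase i).erase j := by
  rw [sdiff_insert, sdiff_singleton_eq_erase, erase_right_comm]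

end Finset

open Finset in
theorem dummy_iff_dependencySet_empty_general {α : Type*} [DecidableEq α]
    (N : Finset α) (v : Finset α → ℝ) (hv0 : v ∅ = 0) (i : α) :
    (∀ S ⊆ N.erase i, v (insert i S) - v S = 0) ↔
    (v {i} = 0 ∧ ∀ j ∈ N, j ≠ i →
      ¬ ∃ S ⊆ N \ {i, j},
          v (insert i (insert j S)) - v (insert j S) ≠ v (insert i S) - v S) := by
  simp only [sdiff_pair_eq_erase_erase, not_exists, not_and, not_not]
  constructor
  · intro hdummy
    refine ⟨by simpa [hv0] using hdummy ∅ (empty_subset _), fun j hj hji S hS => ?_⟩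
    have hS' : S ⊆ N.erase i := hS.trans (erase_subset j _)
    rw [hdummy _ (insert_subset (mem_erase.2 ⟨hji, hj⟩) hS'), hdummy S hS']
  · rintro ⟨hvi, hindep⟩ S hS
    have hindep' : ∀ j ∈ N.erase i, ∀ S ⊆ (N.erase i).erase j,
        v (insert i (insert j S)) - v (insert j S) = v (insert i S) - v S :=
      fun j hj => hindep j (mem_of_mem_erase hj) (ne_of_mem_erase hj)
    rw [marginal_eq_marginal_empty hindep' S hS, hvi, hv0, sub_zero]

/-- A player is a dummy iff her singleton value is 0 and her dependency set is empty. -/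
theorem dummy_iff_dependencySet_empty {α : Type*} [DecidableEq α]
    (N : Finset α) (v : Finset α → ℝ) (hv0 : v ∅ = 0) (i : α) (hi : i ∈ N) :
    (∀ S ⊆ N.erase i, v (insert i S) - v S = 0) ↔
    (v {i} = 0 ∧ ∀ j ∈ N, j ≠ i →
      ¬ ∃ S ⊆ N \ {i, j},
          v (insert i (insert j S)) - v (insert j S) ≠ v (insert i S) - v S) :=
  dummy_iff_dependencySet_empty_general N v hv0 i
end

section
/- In a simple game (N,v), distinct players i and j positively depend on each other if and only if there exists a minimal winning coalition S ⊆ N with i,j ∈ S. -/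
/-!
If adding `i` to `T` helps more once `j` is present, then `T ∪ {i, j}` wins while `T ∪ {i}` and
`T ∪ {j}` lose; a minimal winning coalition inside `T ∪ {i, j}` can then avoid neither `i` nor `j`.
Conversely, for a minimal winning `S ∋ i, j` take `T = S \ {i, j}`: the marginal contribution of
`i` is `v S - v (S \ {i}) = 1` with `j` present and `v (S \ {j}) - v T ≤ 0` without it.
-/

namespace SimpleGame

variable {α : Type*} [DecidableEq α] {N : Finset α} {v : Finset α → ℝ}

theorem exists_minimalWinning_subset (hvals : ∀ S ⊆ N, v S = 0 ∨ v S = 1) {A : Finset α}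
    (hAN : A ⊆ N) (hA : v A = 1) : ∃ S ⊆ A, v S = 1 ∧ ∀ k ∈ S, v (S.erase k) = 0 := by
  obtain ⟨S, hSA, hS⟩ := exists_minimal_le_of_wellFoundedLT (fun S => v S = 1) A hA
  refine ⟨S, hSA, hS.prop, fun k hk => ?_⟩
  refine (hvals _ ((S.erase_subset k).trans (hSA.trans hAN))).resolve_right fun hwin => ?_
  exact hS.not_prop_of_lt (Finset.erase_ssubset hk) hwin

theorem mem_of_winning_subset_insert (hmono : ∀ S T : Finset α, S ⊆ T → T ⊆ N → v S ≤ v T)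
    {S B : Finset α} {a : α} (hBN : B ⊆ N) (hB : v B = 0) (hS : v S = 1)
    (hSB : S ⊆ insert a B) : a ∈ S := by
  by_contra haS
  have := hmono S B ((Finset.subset_insert_iff_of_notMem haS).mp hSB) hBN
  linarith

theorem winning_losing_losing_of_marginal_gt
    (hmono : ∀ S T : Finset α, S ⊆ T → T ⊆ N → v S ≤ v T)
    (hvals : ∀ S ⊆ N, v S = 0 ∨ v S = 1) {i j : α} {T : Finset α}
    (hi : i ∈ N) (hj : j ∈ N) (hTN : T ⊆ N)
    (hgt : v (insert i (insert j T)) - v (insert j T) > v (insert i T) - v T) :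
    v (insert i (insert j T)) = 1 ∧ v (insert j T) = 0 ∧ v (insert i T) = 0 := by
  have hjT : insert j T ⊆ N := Finset.insert_subset hj hTN
  have hiT : insert i T ⊆ N := Finset.insert_subset hi hTN
  have hjT_mono := hmono _ _ (T.subset_insert j) hjT
  have hiT_mono := hmono _ _ (T.subset_insert i) hiT
  rcases hvals _ (Finset.insert_subset hi hjT) with h₁ | h₁ <;>
    rcases hvals _ hjT with h₂ | h₂ <;> rcases hvals _ hiT with h₃ | h₃ <;>
    rcases hvals _ hTN with h₄ | h₄ <;>
    first
    | exact ⟨h₁, h₂, h₃⟩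
    | (exfalso; linarith)

theorem exists_minimalWinning_of_marginal_gt
    (hmono : ∀ S T : Finset α, S ⊆ T → T ⊆ N → v S ≤ v T)
    (hvals : ∀ S ⊆ N, v S = 0 ∨ v S = 1) {i j : α} {T : Finset α}
    (hi : i ∈ N) (hj : j ∈ N) (hTN : T ⊆ N)
    (hgt : v (insert i (insert j T)) - v (insert j T) > v (insert i T) - v T) :
    ∃ S ⊆ N, v S = 1 ∧ (∀ k ∈ S, v (S.erase k) = 0) ∧ i ∈ S ∧ j ∈ S := by
  obtain ⟨hwin, hloseJ, hloseI⟩ := winning_losing_losing_of_marginal_gt hmono hvals hi hj hTN hgt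
  have hAN : insert i (insert j T) ⊆ N := Finset.insert_subset hi (Finset.insert_subset hj hTN)
  obtain ⟨S, hSA, hS, hmin⟩ := exists_minimalWinning_subset hvals hAN hwin
  refine ⟨S, hSA.trans hAN, hS, hmin, ?_, ?_⟩
  · exact mem_of_winning_subset_insert hmono (Finset.insert_subset hj hTN) hloseJ hS hSA
  · rw [Finset.insert_comm] at hSA
    exact mem_of_winning_subset_insert hmono (Finset.insert_subset hi hTN) hloseI hS hSA

theorem marginal_gt_of_minimalWinning (hvals : ∀ S ⊆ N, v S = 0 ∨ v S = 1) {i j : α}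
    (hij : i ≠ j) {S : Finset α} (hSN : S ⊆ N) (hS : v S = 1)
    (hmin : ∀ k ∈ S, v (S.erase k) = 0) (hiS : i ∈ S) (hjS : j ∈ S) :
    ∃ T ⊆ N \ {i, j},
      v (insert i (insert j T)) - v (insert j T) > v (insert i T) - v T := by
  refine ⟨S \ {i, j}, Finset.sdiff_subset_sdiff hSN le_rfl, ?_⟩
  have hwithJ : insert j (S \ {i, j}) = S.erase i := by
    rw [Finset.sdiff_insert, Finset.sdiff_singleton_eq_erase, Finset.erase_right_comm,
      Finset.insert_erase (Finset.mem_erase.mpr ⟨hij.symm, hjS⟩)]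
  have hwithI : insert i (S \ {i, j}) = S.erase j := by
    rw [Finset.sdiff_insert, Finset.sdiff_singleton_eq_erase,
      Finset.insert_erase (Finset.mem_erase.mpr ⟨hij, hiS⟩)]
  have hT : 0 ≤ v (S \ {i, j}) := by
    rcases hvals _ (Finset.sdiff_subset.trans hSN) with h | h <;> linarith
  rw [hwithJ, hwithI, Finset.insert_erase hiS, hS, hmin i hiS, hmin j hjS]
  linarith

end SimpleGame

theorem posDepends_iff_mem_minimalWinning_general {α : Type*} [DecidableEq α]
    (N : Finset α) (v : Finset α → ℝ)
    (hmono : ∀ S T : Finset α, S ⊆ T → T ⊆ N → v S ≤ v T)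
    (hvals : ∀ S ⊆ N, v S = 0 ∨ v S = 1)
    (i j : α) (hi : i ∈ N) (hj : j ∈ N) (hij : i ≠ j) :
    (∃ T ⊆ N \ {i, j},
        v (insert i (insert j T)) - v (insert j T) > v (insert i T) - v T) ↔
    (∃ S ⊆ N, v S = 1 ∧ (∀ k ∈ S, v (S.erase k) = 0) ∧ i ∈ S ∧ j ∈ S) := by
  constructor
  · rintro ⟨T, hT, hgt⟩
    exact SimpleGame.exists_minimalWinning_of_marginal_gt hmono hvals hi hj
      (hT.trans Finset.sdiff_subset) hgt
  · rintro ⟨S, hSN, hS, hmin, hiS, hjS⟩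
    exact SimpleGame.marginal_gt_of_minimalWinning hvals hij hSN hS hmin hiS hjS

/-- In a simple game, two distinct players positively depend on each other iff
some minimal winning coalition contains both of them. -/
theorem posDepends_iff_mem_minimalWinning {α : Type*} [DecidableEq α]
    (N : Finset α) (v : Finset α → ℝ) (hv0 : v ∅ = 0)
    (hmono : ∀ S T : Finset α, S ⊆ T → T ⊆ N → v S ≤ v T)
    (hvals : ∀ S ⊆ N, v S = 0 ∨ v S = 1)
    (i j : α) (hi : i ∈ N) (hj : j ∈ N) (hij : i ≠ j) :
    (∃ T ⊆ N \ {i, j},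
        v (insert i (insert j T)) - v (insert j T) > v (insert i T) - v T) ↔
    (∃ S ⊆ N, v S = 1 ∧ (∀ k ∈ S, v (S.erase k) = 0) ∧ i ∈ S ∧ j ∈ S) :=
  posDepends_iff_mem_minimalWinning_general N v hmono hvals i j hi hj hij
end

section
/- In a weighted voting game [N; w; q], if player i positively depends on player k and w_i ≥ w_j ≥ w_k for some player j distinct from i and k, then player i positively depends on player j. -/
/-!
Take a coalition `S` on which `i` and `k` are jointly pivotal. If `j ∉ S`, then `S` itself works
for `i` and `j`: replacing `k` by the heavier `j` keeps `S ∪ {i, j}` winning, and `S ∪ {j}` is no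
heavier than the losing `S ∪ {i}`. If `j ∈ S`, exchange `j` for `k` inside `S`: this leaves
`S ∪ {i, k}` and `S ∪ {k}` unchanged as sets and makes `S ∪ {i}` lighter.
-/

open Finset

namespace WeightedVoting

variable {α M : Type*} [DecidableEq α] [AddCommMonoid M] [PartialOrder M] [IsOrderedAddMonoid M]

def IsJointlyPivotal (w : α → M) (q : M) (S : Finset α) (i j : α) : Prop :=
  q ≤ ∑ a ∈ insert i (insert j S), w a ∧
    ¬ q ≤ ∑ a ∈ insert i S, w a ∧
    ¬ q ≤ ∑ a ∈ insert j S, w a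

lemma sum_insert_le_sum_insert {w : α → M} {S : Finset α} {a b : α}
    (ha : a ∉ S) (hb : b ∉ S) (hab : w a ≤ w b) :
    ∑ x ∈ insert a S, w x ≤ ∑ x ∈ insert b S, w x := by
  rw [sum_insert ha, sum_insert hb]
  exact add_le_add_left hab _

lemma subset_sdiff_pair_iff {S N : Finset α} {a b : α} :
    S ⊆ N \ {a, b} ↔ S ⊆ N ∧ a ∉ S ∧ b ∉ S := by
  simp only [subset_sdiff, disjoint_insert_right, disjoint_singleton_right]

variable {w : α → M} {q : M} {S : Finset α} {i j k : α}

lemma IsJointlyPivotal.of_notMem (h : IsJointlyPivotal w q S i k)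
    (hiS : i ∉ S) (hjS : j ∉ S) (hkS : k ∉ S) (hji : j ≠ i) (hik : i ≠ k)
    (hwk : w k ≤ w j) (hwj : w j ≤ w i) :
    IsJointlyPivotal w q S i j := by
  obtain ⟨hwin, hlose_i, -⟩ := h
  refine ⟨?_, hlose_i, fun hj ↦ hlose_i (hj.trans (sum_insert_le_sum_insert hjS hiS hwj))⟩
  rw [insert_comm] at hwin ⊢
  exact hwin.trans (sum_insert_le_sum_insert (by simp [hik.symm, hkS]) (by simp [hji, hjS]) hwk)

lemma IsJointlyPivotal.exchange (h : IsJointlyPivotal w q S i k)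
    (hjS : j ∈ S) (hkS : k ∉ S) (hji : j ≠ i) (hik : i ≠ k)
    (hwk : w k ≤ w j) :
    IsJointlyPivotal w q (insert k (S.erase j)) i j := by
  obtain ⟨hwin, hlose_i, hlose_k⟩ := h
  have hjk_S : insert j (insert k (S.erase j)) = insert k S := by
    rw [insert_comm, insert_erase hjS]
  refine ⟨by rwa [hjk_S], fun hi ↦ hlose_i (hi.trans ?_), by rwa [hjk_S]⟩
  conv_rhs => rw [← insert_erase hjS]
  rw [insert_comm i k, insert_comm i j]
  exact sum_insert_le_sum_insert (by simp [hik.symm, hkS]) (by simp [hji]) hwk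

end WeightedVoting

open WeightedVoting in
theorem wvg_posDepends_of_weight_between_general {α : Type*} [DecidableEq α]
    (N : Finset α) (w : α → ℝ) (q : ℝ)
    (i j k : α) (hk : k ∈ N)
    (hji : j ≠ i) (hjk : j ≠ k) (hik : i ≠ k)
    (hwk : w k ≤ w j) (hwj : w j ≤ w i)
    (hdep : ∃ S ⊆ N \ {i, k},
      q ≤ ∑ a ∈ insert i (insert k S), w a ∧
      ¬ q ≤ ∑ a ∈ insert i S, w a ∧
      ¬ q ≤ ∑ a ∈ insert k S, w a) :
    ∃ S ⊆ N \ {i, j},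
      q ≤ ∑ a ∈ insert i (insert j S), w a ∧
      ¬ q ≤ ∑ a ∈ insert i S, w a ∧
      ¬ q ≤ ∑ a ∈ insert j S, w a := by
  obtain ⟨S, hS, hpiv⟩ := hdep
  obtain ⟨hSN, hiS, hkS⟩ := subset_sdiff_pair_iff.mp hS
  by_cases hjS : j ∈ S
  · refine ⟨insert k (S.erase j), subset_sdiff_pair_iff.mpr ⟨?_, ?_, ?_⟩,
      IsJointlyPivotal.exchange hpiv hjS hkS hji hik hwk⟩
    · exact insert_subset hk ((erase_subset j S).trans hSN)
    · simp [hik, hiS]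
    · simp [hjk]
  · exact ⟨S, subset_sdiff_pair_iff.mpr ⟨hSN, hiS, hjS⟩,
      IsJointlyPivotal.of_notMem hpiv hiS hjS hkS hji hik hwk hwj⟩

/-- In a weighted voting game, if `i` positively depends on `k` and
`w k ≤ w j ≤ w i`, then `i` positively depends on `j`. -/
theorem wvg_posDepends_of_weight_between {α : Type*} [DecidableEq α]
    (N : Finset α) (w : α → ℝ) (hw : ∀ a, 0 ≤ w a) (q : ℝ) (hq : 0 < q)
    (i j k : α) (hi : i ∈ N) (hj : j ∈ N) (hk : k ∈ N)
    (hji : j ≠ i) (hjk : j ≠ k) (hik : i ≠ k)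
    (hwk : w k ≤ w j) (hwj : w j ≤ w i)
    (hdep : ∃ S ⊆ N \ {i, k},
      q ≤ ∑ a ∈ insert i (insert k S), w a ∧
      ¬ q ≤ ∑ a ∈ insert i S, w a ∧
      ¬ q ≤ ∑ a ∈ insert k S, w a) :
    ∃ S ⊆ N \ {i, j},
      q ≤ ∑ a ∈ insert i (insert j S), w a ∧
      ¬ q ≤ ∑ a ∈ insert i S, w a ∧
      ¬ q ≤ ∑ a ∈ insert j S, w a :=
  wvg_posDepends_of_weight_between_general N w q i j k hk hji hjk hik hwk hwj hdep
end

section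
/- The supermodular dependency graph of any weighted voting game [N; w; q] is chordal: it has no induced cycle of length at least 4. -/
/-!
Take a vertex `j` of minimum weight on an induced cycle, with neighbours `i` and `k`, say
`w k ≤ w i`. A swing set `S` for `{i, j}` yields one for `{i, k}`: if `k ∈ S`, exchange `k` for
`j` in `S`; otherwise `S` itself works, since `S ∪ {k}` winning while `S ∪ {i}` loses would
force `w i < w k`. So the two neighbours of `j` are adjacent, which an induced cycle of length
at least 4 forbids.
-/

open Finset

/-- The supermodular dependency adjacency relation of a weighted voting game. -/
def wvgPosDep {α : Type*} [Fintype α] [DecidableEq α] (w : α → ℝ) (q : ℝ) (i j : α) : Prop :=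
  i ≠ j ∧ ∃ S ⊆ (Finset.univ : Finset α) \ {i, j},
    q ≤ ∑ a ∈ insert i (insert j S), w a ∧
    ¬ q ≤ ∑ a ∈ insert i S, w a ∧
    ¬ q ≤ ∑ a ∈ insert j S, w a

section SwingPair

variable {α : Type*} (w : α → ℝ) (q : ℝ)

/-- `S ∪ {i, j}` wins while `S ∪ {i}` and `S ∪ {j}` lose: `S` witnesses the edge `{i, j}`. -/
def IsSwingPair (i j : α) (S : Finset α) : Prop :=
  i ≠ j ∧ i ∉ S ∧ j ∉ S ∧ q ≤ w i + w j + ∑ a ∈ S, w a ∧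
    w i + ∑ a ∈ S, w a < q ∧ w j + ∑ a ∈ S, w a < q

variable {w q}

theorem IsSwingPair.symm {i j : α} {S : Finset α} (h : IsSwingPair w q i j S) :
    IsSwingPair w q j i S := by
  obtain ⟨hij, hi, hj, hwin, hi_lose, hj_lose⟩ := h
  exact ⟨hij.symm, hj, hi, by linarith, hj_lose, hi_lose⟩

theorem IsSwingPair.exchange [DecidableEq α] {i j k : α} {S : Finset α}
    (h : IsSwingPair w q i j S) (hk : k ∈ S) (hjk : w j ≤ w k) :
    IsSwingPair w q i k (insert j (S.erase k)) := by
  obtain ⟨hij, hi, hj, hwin, hi_lose, hj_lose⟩ := h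
  have hsum : ∑ a ∈ insert j (S.erase k), w a = w j + ∑ a ∈ S, w a - w k := by
    rw [sum_insert (fun h ↦ hj (mem_of_mem_erase h)), ← add_sum_erase S w hk]
    ring
  refine ⟨fun h ↦ hi (h ▸ hk), ?_, ?_, ?_, ?_, ?_⟩
  · rw [mem_insert, not_or]
    exact ⟨hij, fun h ↦ hi (mem_of_mem_erase h)⟩
  · rw [mem_insert, not_or]
    exact ⟨fun h ↦ hj (h ▸ hk), notMem_erase k S⟩
  all_goals rw [hsum]; linarith

theorem IsSwingPair.of_le [DecidableEq α] {i j k : α} {S : Finset α}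
    (h : IsSwingPair w q i j S) (hik : i ≠ k) (hwk : w j ≤ w k) (hwi : w k ≤ w i) :
    ∃ T, IsSwingPair w q i k T := by
  by_cases hk : k ∈ S
  · exact ⟨_, h.exchange hk hwk⟩
  obtain ⟨-, hi, -, hwin, hi_lose, -⟩ := h
  refine ⟨S, hik, hi, hk, by linarith, hi_lose, ?_⟩
  by_contra! hk_win
  linarith

end SwingPair

section WvgPosDep

variable {α : Type*} [Fintype α] [DecidableEq α] {w : α → ℝ} {q : ℝ}

theorem wvgPosDep_iff_exists_isSwingPair {i j : α} :
    wvgPosDep w q i j ↔ ∃ S, IsSwingPair w q i j S := by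
  have hsums {S : Finset α} (hij : i ≠ j) (hi : i ∉ S) (hj : j ∉ S) :
      (q ≤ ∑ a ∈ insert i (insert j S), w a ∧ ¬ q ≤ ∑ a ∈ insert i S, w a ∧
        ¬ q ≤ ∑ a ∈ insert j S, w a) ↔
      (q ≤ w i + w j + ∑ a ∈ S, w a ∧
        w i + ∑ a ∈ S, w a < q ∧ w j + ∑ a ∈ S, w a < q) := by
    rw [sum_insert (by simp [hij, hi]), sum_insert hi, sum_insert hj, add_assoc, not_le, not_le]
  simp only [wvgPosDep, IsSwingPair, subset_sdiff, subset_univ, true_and, disjoint_insert_right,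
    disjoint_singleton_right]
  constructor
  · rintro ⟨hij, S, ⟨hi, hj⟩, h⟩
    exact ⟨S, hij, hi, hj, (hsums hij hi hj).1 h⟩
  · rintro ⟨S, hij, hi, hj, h⟩
    exact ⟨hij, S, ⟨hi, hj⟩, (hsums hij hi hj).2 h⟩

theorem wvgPosDep_of_le_of_le {i j k : α} (hik : i ≠ k) (hwi : w j ≤ w i) (hwk : w j ≤ w k)
    (hij : wvgPosDep w q i j) (hjk : wvgPosDep w q j k) : wvgPosDep w q i k := by
  simp only [wvgPosDep_iff_exists_isSwingPair] at *
  obtain ⟨S, hS⟩ := hij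
  obtain ⟨T, hT⟩ := hjk
  rcases le_total (w k) (w i) with hki | hik_le
  · exact hS.of_le hik hwk hki
  · obtain ⟨U, hU⟩ := hT.symm.of_le hik.symm hwi hik_le
    exact ⟨U, hU.symm⟩

end WvgPosDep

namespace ZMod

variable {m : ℕ}

theorem natCast_ne_zero_of_pos_of_lt {n : ℕ} (h0 : 0 < n) (hn : n < m) : (n : ZMod m) ≠ 0 := by
  rw [Ne, natCast_eq_zero_iff]
  exact fun h ↦ (Nat.le_of_dvd h0 h).not_gt hn

theorem sub_one_ne_add_one (hm : 3 ≤ m) (v : ZMod m) : v - 1 ≠ v + 1 := by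
  intro h
  exact natCast_ne_zero_of_pos_of_lt (m := m) (n := 2) (by norm_num) (by omega)
    (by push_cast; linear_combination -h)

theorem not_sub_one_adj_add_one (hm : 4 ≤ m) (v : ZMod m) :
    ¬ (v + 1 = v - 1 + 1 ∨ v - 1 = v + 1 + 1) := by
  rintro (h | h)
  · exact natCast_ne_zero_of_pos_of_lt (m := m) (n := 1) (by norm_num) (by omega)
      (by push_cast; linear_combination h)
  · exact natCast_ne_zero_of_pos_of_lt (m := m) (n := 3) (by norm_num) (by omega)
      (by push_cast; linear_combination -h)

end ZMod

theorem wvg_supermodularDependencyGraph_chordal_general {α : Type*} [Fintype α] [DecidableEq α]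
    (w : α → ℝ) (q : ℝ) :
    ¬ ∃ (m : ℕ) (f : ZMod m → α), 4 ≤ m ∧ Function.Injective f ∧
        ∀ a b : ZMod m, wvgPosDep w q (f a) (f b) ↔ (b = a + 1 ∨ a = b + 1) := by
  rintro ⟨m, f, hm, hf, hcyc⟩
  have : NeZero m := ⟨by omega⟩
  obtain ⟨v, -, hv⟩ := exists_min_image univ (fun a ↦ w (f a)) univ_nonempty
  have hnbrs : wvgPosDep w q (f (v - 1)) (f (v + 1)) :=
    wvgPosDep_of_le_of_le (hf.ne (ZMod.sub_one_ne_add_one (by omega) v)) (hv _ (mem_univ _))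
      (hv _ (mem_univ _)) ((hcyc _ _).2 (.inl (sub_add_cancel v 1).symm))
      ((hcyc _ _).2 (.inl rfl))
  exact ZMod.not_sub_one_adj_add_one hm v ((hcyc _ _).1 hnbrs)

/-- The supermodular dependency graph of a weighted voting game is chordal:
it contains no induced cycle of length at least 4. -/
theorem wvg_supermodularDependencyGraph_chordal {α : Type*} [Fintype α] [DecidableEq α]
    (w : α → ℝ) (hw : ∀ a, 0 ≤ w a) (q : ℝ) (hq : 0 < q) :
    ¬ ∃ (m : ℕ) (f : ZMod m → α), 4 ≤ m ∧ Function.Injective f ∧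
        ∀ a b : ZMod m, wvgPosDep w q (f a) (f b) ↔ (b = a + 1 ∨ a = b + 1) :=
  wvg_supermodularDependencyGraph_chordal_general w q
end

section
/- Let (N,v) be a cooperative game, i ∈ N, D(i) its dependency set, and I(i) = N \ (D(i) ∪ {i}). Then for every S ⊆ D(i) and every T ⊆ I(i), v(i | S ∪ T) = v(i | S), i.e., v(S ∪ T ∪ {i}) − v(S ∪ T) = v(S ∪ {i}) − v(S). -/
/-! Add the players of `T` one at a time: a new player `j` either already lies in the current
coalition `S ∪ T'`, or `i` does not depend on `j`, and independence, applied to `U = S ∪ T'`, gives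
`v(i | S ∪ T' ∪ {j}) = v(i | S ∪ T')`. -/

section

open Finset

variable {α G : Type*} [DecidableEq α] [AddCommGroup G]

def marginal (v : Finset α → G) (i : α) (S : Finset α) : G := v (insert i S) - v S

theorem subset_sdiff_pair_of_subset_erase {N U : Finset α} {i j : α}
    (hU : U ⊆ N.erase i) (hj : j ∉ U) : U ⊆ N \ {i, j} := by
  intro x hx
  have hxN := hU hx
  simp only [mem_sdiff, mem_insert, mem_singleton, not_or]
  exact ⟨mem_of_mem_erase hxN, ne_of_mem_erase hxN, fun hxj => hj (hxj ▸ hx)⟩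

theorem marginal_union_eq_of_forall_indep {N S T : Finset α} {v : Finset α → G} {i : α}
    (hST : S ∪ T ⊆ N.erase i)
    (hT : ∀ j ∈ T, ∀ U ⊆ N \ {i, j}, marginal v i (insert j U) = marginal v i U) :
    marginal v i (S ∪ T) = marginal v i S := by
  induction T using Finset.induction_on with
  | empty => rw [union_empty]
  | @insert j T _ ih =>
    rw [union_insert] at hST ⊢
    have ih' := ih ((subset_insert j _).trans hST) fun k hk => hT k (mem_insert_of_mem hk)
    by_cases hj : j ∈ S ∪ T
    · rwa [insert_eq_of_mem hj]
    · have hU := subset_sdiff_pair_of_subset_erase ((subset_insert j _).trans hST) hj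
      rw [hT j (mem_insert_self j T) _ hU, ih']

end

theorem marginal_eq_of_indep_general {α : Type*} [DecidableEq α]
    (N : Finset α) (v : Finset α → ℝ) (i : α)
    (S T : Finset α) (hS : S ⊆ N.erase i) (hT : T ⊆ N.erase i)
    (hTindep : ∀ j ∈ T, ¬ ∃ U ⊆ N \ {i, j},
        v (insert i (insert j U)) - v (insert j U) ≠ v (insert i U) - v U) :
    v (insert i (S ∪ T)) - v (S ∪ T) = v (insert i S) - v S := by
  have hindep : ∀ j ∈ T, ∀ U ⊆ N \ {i, j}, marginal v i (insert j U) = marginal v i U :=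
    fun j hj U hU => not_not.mp fun hne => hTindep j hj ⟨U, hU, hne⟩
  exact marginal_union_eq_of_forall_indep (Finset.union_subset hS hT) hindep

/-- Lemma 5: adding players on whom `i` does not depend does not change
`i`'s marginal contribution. -/
theorem marginal_eq_of_indep {α : Type*} [DecidableEq α]
    (N : Finset α) (v : Finset α → ℝ) (hv0 : v ∅ = 0) (i : α) (hi : i ∈ N)
    (S T : Finset α) (hS : S ⊆ N.erase i) (hT : T ⊆ N.erase i)
    (hSdep : ∀ j ∈ S, ∃ U ⊆ N \ {i, j},
        v (insert i (insert j U)) - v (insert j U) ≠ v (insert i U) - v U)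
    (hTindep : ∀ j ∈ T, ¬ ∃ U ⊆ N \ {i, j},
        v (insert i (insert j U)) - v (insert j U) ≠ v (insert i U) - v U) :
    v (insert i (S ∪ T)) - v (S ∪ T) = v (insert i S) - v S :=
  marginal_eq_of_indep_general N v i S T hS hT hTindep
end

section
/- Let (N,v) be a cooperative game with n players, i ∈ N, D(i) its dependency set and I(i) = N \ (D(i) ∪ {i}). Then the Shapley value of i satisfies φ_i(N,v) = Σ_{S ⊆ D(i)} v(i|S) · Σ_{t=0}^{|I(i)|} C(|I(i)|, t) · (|S|+t)! (n−|S|−t−1)! / n!. -/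
/-!
If `j ∉ D(i)`, adding `j` to a coalition never changes the marginal contribution of `i`;
adding the members of `B ⊆ I(i)` one at a time therefore gives `v(i | A ∪ B) = v(i | A)` for
`A ⊆ D(i)`. Writing each `S ⊆ N \ {i}` uniquely as `A ∪ B` with `A ⊆ D(i)` and `B ⊆ I(i)`, the
Shapley weight of `S` depends only on `|A| + |B|`, and grouping the `B` by size produces the
binomial coefficients `C(|I(i)|, t)`.
-/

open Finset

open Classical in
/-- The dependency set of a player `i` in a cooperative game `(N, v)`. -/
noncomputable def depSet {α : Type*} [DecidableEq α] (N : Finset α) (v : Finset α → ℝ)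
    (i : α) : Finset α :=
  (N.erase i).filter (fun j => ∃ S ⊆ N \ {i, j},
    v (insert i (insert j S)) - v (insert j S) ≠ v (insert i S) - v S)

theorem Finset.sum_powerset_union {α β : Type*} [DecidableEq α] [AddCommMonoid β]
    {s t : Finset α} (h : Disjoint s t) (f : Finset α → β) :
    ∑ u ∈ (s ∪ t).powerset, f u = ∑ a ∈ s.powerset, ∑ b ∈ t.powerset, f (a ∪ b) := by
  induction t using Finset.induction_on generalizing f with
  | empty => simp
  | @insert x t hx ih =>
    have hxs : x ∉ s := disjoint_right.1 h (mem_insert_self x t)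
    have hst : Disjoint s t := h.mono_right (subset_insert x t)
    rw [union_insert, sum_powerset_insert (by simp [hxs, hx]), ih hst, ih hst,
      ← sum_add_distrib]
    refine sum_congr rfl fun a _ => ?_
    simp only [sum_powerset_insert hx, union_insert]

section

variable {α : Type*} [DecidableEq α] {N : Finset α} {v : Finset α → ℝ} {i : α}

theorem marginal_insert_eq_of_mem_sdiff_depSet {j : α} (hj : j ∈ N.erase i \ depSet N v i)
    {S : Finset α} (hS : S ⊆ N \ {i, j}) :
    v (insert i (insert j S)) - v (insert j S) = v (insert i S) - v S := by
  by_contra h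
  exact (mem_sdiff.1 hj).2 (mem_filter.2 ⟨(mem_sdiff.1 hj).1, S, hS, h⟩)

theorem marginal_union_eq_of_subset_sdiff_depSet {A B : Finset α} (hA : A ⊆ N.erase i)
    (hB : B ⊆ N.erase i \ depSet N v i) (hAB : Disjoint A B) :
    v (insert i (A ∪ B)) - v (A ∪ B) = v (insert i A) - v A := by
  induction B using Finset.induction_on with
  | empty => simp
  | @insert j B hjB ih =>
    have hj := hB (mem_insert_self j B)
    have hsub : A ∪ B ⊆ N \ {i, j} := fun x hx => by grind
    rw [union_insert, marginal_insert_eq_of_mem_sdiff_depSet hj hsub]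
    exact ih ((subset_insert j B).trans hB) (hAB.mono_right (subset_insert j B))

end

theorem shapley_eq_sum_over_depSet_general {α : Type*} [DecidableEq α]
    (N : Finset α) (v : Finset α → ℝ) (i : α) :
    (∑ S ∈ (N.erase i).powerset,
        ((Nat.factorial S.card : ℝ) * Nat.factorial (N.card - S.card - 1) /
          Nat.factorial N.card) * (v (insert i S) - v S)) =
    ∑ S ∈ (depSet N v i).powerset, (v (insert i S) - v S) *
      ∑ t ∈ Finset.range (((N.erase i) \ depSet N v i).card + 1),
        (Nat.choose ((N.erase i) \ depSet N v i).card t : ℝ) *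
          Nat.factorial (S.card + t) * Nat.factorial (N.card - S.card - t - 1) /
            Nat.factorial N.card := by
  set D := depSet N v i
  set I := N.erase i \ D
  have hD : D ⊆ N.erase i := filter_subset _ _
  rw [← union_sdiff_of_subset hD, sum_powerset_union disjoint_sdiff]
  refine sum_congr rfl fun A hA => ?_
  set f : ℕ → ℝ := fun m =>
    (A.card + m).factorial * (N.card - A.card - m - 1).factorial / N.card.factorial
  calc _ = ∑ B ∈ I.powerset, (v (insert i A) - v A) * f B.card := by
        refine sum_congr rfl fun B hB => ?_
        have hAB : Disjoint A B :=
          disjoint_sdiff.mono (mem_powerset.1 hA) (mem_powerset.1 hB)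
        rw [card_union_of_disjoint hAB, ← Nat.sub_sub,
          marginal_union_eq_of_subset_sdiff_depSet ((mem_powerset.1 hA).trans hD)
            (mem_powerset.1 hB) hAB]
        simp only [f]
        ring
    _ = _ := by
        rw [← mul_sum, sum_powerset_apply_card]
        simp only [f, nsmul_eq_mul, mul_div_assoc, mul_assoc]

/-- The Shapley value can be computed by summing over subsets of the dependency set. -/
theorem shapley_eq_sum_over_depSet {α : Type*} [DecidableEq α]
    (N : Finset α) (v : Finset α → ℝ) (hv0 : v ∅ = 0) (i : α) (hi : i ∈ N) :
    (∑ S ∈ (N.erase i).powerset,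
        ((Nat.factorial S.card : ℝ) * Nat.factorial (N.card - S.card - 1) /
          Nat.factorial N.card) * (v (insert i S) - v S)) =
    ∑ S ∈ (depSet N v i).powerset, (v (insert i S) - v S) *
      ∑ t ∈ Finset.range (((N.erase i) \ depSet N v i).card + 1),
        (Nat.choose ((N.erase i) \ depSet N v i).card t : ℝ) *
          Nat.factorial (S.card + t) * Nat.factorial (N.card - S.card - t - 1) /
            Nat.factorial N.card :=
  shapley_eq_sum_over_depSet_general N v i
end

section
/- For every even n there exists a family of simple games on n+1 players such that any deterministic algorithm computing the dependency graph using value queries must query the characteristic function at at least C(n, n/2) points: specifically, the games G_H (for each H ⊆ [n] with |H| = n/2) and G_0 defined so that G_0 has v_0(S) = 1 iff |S ∩ [n]| ≥ n/2, and G_H agrees with G_0 except v_H(H) = 0 and v_H(H ∪ {a}) = 1 for an extra player a, cannot all be distinguished from G_0 with fewer than C(n, n/2) queries; player a is a dummy in G_0 but not in any G_H. -/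
open Finset

/-- Number of players of the "ground set" `[n]` present in a coalition
(players are `some x`, the extra player `a` is `none`). -/
def bodyCard (n : ℕ) (S : Finset (Option (Fin n))) : ℕ :=
  (Finset.univ.filter (fun x : Fin n => some x ∈ S)).card

/-- The game `G₀`: a coalition wins iff it contains at least `n/2` ground players. -/
noncomputable def vZero (n : ℕ) (S : Finset (Option (Fin n))) : ℝ :=
  if n / 2 ≤ bodyCard n S then 1 else 0

/-- The game `G_H`: agrees with `G₀` except that the coalition `H` itself loses
(while `H ∪ {a}` still wins). -/
noncomputable def vH (n : ℕ) (H : Finset (Fin n)) (S : Finset (Option (Fin n))) : ℝ :=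
  if S = H.image some then 0 else vZero n S

/-! `G_H` differs from `G₀` only at the coalition `H`, and the `C(n, n/2)` coalitions `H` with
`|H| = n/2` are pairwise distinct, so fewer queries miss one of them. Making `H` losing keeps the
game monotone because every proper subset of `H` already loses in `G₀`. -/

section bodyCard

variable {n : ℕ}

lemma bodyCard_mono {S T : Finset (Option (Fin n))} (h : S ⊆ T) :
    bodyCard n S ≤ bodyCard n T :=
  card_le_card fun _ hx ↦ by
    simp only [mem_filter, mem_univ, true_and] at hx ⊢
    exact h hx

lemma bodyCard_eq_card {S : Finset (Option (Fin n))} (h : none ∉ S) :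
    bodyCard n S = S.card := by
  have hS : (univ.filter fun x : Fin n ↦ some x ∈ S).image some = S := by
    ext (_ | x)
    · simpa using h
    · simp
  rw [bodyCard, ← card_image_of_injective _ (Option.some_injective _), hS]

@[simp]
lemma bodyCard_image_some (H : Finset (Fin n)) : bodyCard n (H.image some) = H.card := by
  rw [bodyCard_eq_card (by simp), card_image_of_injective _ (Option.some_injective _)]

@[simp]
lemma bodyCard_insert_none (S : Finset (Option (Fin n))) :
    bodyCard n (insert none S) = bodyCard n S := by
  simp [bodyCard]

@[simp]
lemma bodyCard_empty : bodyCard n ∅ = 0 := by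
  simp [bodyCard]

end bodyCard

section vZero

variable {n : ℕ}

lemma vZero_nonneg (S : Finset (Option (Fin n))) : 0 ≤ vZero n S := by
  unfold vZero
  split_ifs <;> norm_num

lemma vZero_of_lt {S : Finset (Option (Fin n))} (h : bodyCard n S < n / 2) : vZero n S = 0 :=
  if_neg h.not_ge

lemma vZero_mono : Monotone (vZero n) := by
  intro S T h
  unfold vZero
  split_ifs with hS hT
  · rfl
  · exact absurd (hS.trans (bodyCard_mono h)) hT
  all_goals norm_num

lemma vZero_empty (hn : 0 < n / 2) : vZero n ∅ = 0 :=
  vZero_of_lt (by simpa using hn)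

lemma vZero_insert_none (S : Finset (Option (Fin n))) : vZero n (insert none S) = vZero n S := by
  simp [vZero]

end vZero

section vH

variable {n : ℕ} {H : Finset (Fin n)}

lemma vH_of_ne {S : Finset (Option (Fin n))} (h : S ≠ H.image some) : vH n H S = vZero n S :=
  if_neg h

lemma vH_image_some : vH n H (H.image some) = 0 :=
  if_pos rfl

lemma vH_le_vZero (S : Finset (Option (Fin n))) : vH n H S ≤ vZero n S := by
  unfold vH
  split_ifs
  exacts [vZero_nonneg S, le_rfl]

lemma vH_insert_none_image_some (hH : H.card = n / 2) :
    vH n H (insert none (H.image some)) = 1 := by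
  have hne : insert none (H.image some) ≠ H.image some := by simp [insert_eq_self]
  simp [vH_of_ne hne, vZero, hH]

lemma vH_mono (hH : H.card = n / 2) : Monotone (vH n H) := by
  intro S T hST
  by_cases hT : T = H.image some
  · subst hT
    rcases hST.eq_or_ssubset with rfl | hlt
    · rfl
    · have hS : S ≠ H.image some := hlt.ne
      have hcard : bodyCard n S < n / 2 := by
        rw [← hH, bodyCard_eq_card fun h ↦ by simpa using hlt.subset h]
        simpa [card_image_of_injective _ (Option.some_injective _)] using card_lt_card hlt
      rw [vH_of_ne hS, vZero_of_lt hcard, vH_image_some]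
  · calc vH n H S ≤ vZero n S := vH_le_vZero S
      _ ≤ vZero n T := vZero_mono hST
      _ = vH n H T := (vH_of_ne hT).symm

end vH

lemma exists_image_some_notMem {n k : ℕ} {Q : Finset (Finset (Option (Fin n)))}
    (hQ : Q.card < n.choose k) : ∃ H : Finset (Fin n), H.card = k ∧ H.image some ∉ Q := by
  have hinj : Function.Injective fun H : Finset (Fin n) ↦ H.image some :=
    image_injective (Option.some_injective _)
  obtain ⟨_, hmem, hnotMem⟩ := exists_mem_notMem_of_card_lt_card
    (s := Q) (t := (powersetCard k univ).image fun H ↦ H.image some)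
    (by simpa [card_image_of_injective _ hinj] using hQ)
  obtain ⟨H, hH, rfl⟩ := mem_image.mp hmem
  exact ⟨H, mem_powersetCard_univ.mp hH, hnotMem⟩

/-- Query lower bound: fewer than `C(n, n/2)` value queries cannot distinguish `G₀`
from all games `G_H`; the extra player `a = none` is a dummy in `G₀` but pivotal
for `H` in `G_H`, and each `v_H` is monotone. -/
theorem dependencyGraph_query_lower_bound (n : ℕ) (hn : Even n) (hpos : 0 < n)
    (Q : Finset (Finset (Option (Fin n)))) (hQ : Q.card < Nat.choose n (n / 2)) :
    ∃ H : Finset (Fin n), H.card = n / 2 ∧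
      (∀ S ∈ Q, vH n H S = vZero n S) ∧
      Monotone (vH n H) ∧
      vH n H ∅ = 0 ∧ vZero n ∅ = 0 ∧
      (∀ S : Finset (Option (Fin n)), vZero n (insert none S) = vZero n S) ∧
      vH n H (H.image some) = 0 ∧ vH n H (insert none (H.image some)) = 1 := by
  have hhalf : 0 < n / 2 := by
    obtain ⟨k, rfl⟩ := hn
    omega
  obtain ⟨H, hH, hHQ⟩ := exists_image_some_notMem hQ
  have hempty : (∅ : Finset (Option (Fin n))) ≠ H.image some := by
    rw [ne_comm, Ne, image_eq_empty, ← card_eq_zero]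
    omega
  exact ⟨H, hH, fun S hS ↦ vH_of_ne (ne_of_mem_of_not_mem hS hHQ), vH_mono hH,
    (vH_of_ne hempty).trans (vZero_empty hhalf), vZero_empty hhalf, vZero_insert_none,
    vH_image_some, vH_insert_none_image_some hH⟩
end

section
/- In a simple game (N,v), if player i positively depends on player j, then there exists a minimal winning coalition containing both i and j (the 'only if' direction of Theorem 3): choosing S ⊆ N\{i,j} minimal with the property that S ∪ {i,j} wins while S ∪ {i} and S ∪ {j} lose, the coalition S ∪ {i,j} is a minimal winning coalition. -/
/-!
Take a witness `S` of the dependence that is minimal under inclusion. Removing `i` or `j` from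
`S ∪ {i, j}` gives a losing coalition by the definition of a witness. Removing some `k ∈ S` also
gives a losing coalition: otherwise, by monotonicity, `S \ {k}` would be a smaller witness.
-/

section

open Finset

variable {α : Type*} {N : Finset α} {v : Finset α → ℝ}

theorem eq_zero_of_subset_of_eq_zero (hmono : ∀ S T : Finset α, S ⊆ T → T ⊆ N → v S ≤ v T)
    (hvals : ∀ S ⊆ N, v S = 0 ∨ v S = 1) {A B : Finset α} (hAB : A ⊆ B) (hBN : B ⊆ N)
    (hB : v B = 0) : v A = 0 :=
  (hvals A (hAB.trans hBN)).resolve_right fun hA => by linarith [hmono A B hAB hBN]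

variable [DecidableEq α]

def PosDependsVia (v : Finset α → ℝ) (i j : α) (S : Finset α) : Prop :=
  v (insert i (insert j S)) = 1 ∧ v (insert i S) = 0 ∧ v (insert j S) = 0

def IsMinimalWinning (v : Finset α → ℝ) (T : Finset α) : Prop :=
  v T = 1 ∧ ∀ k ∈ T, v (T.erase k) = 0

namespace PosDependsVia

variable {i j : α} {S : Finset α}

theorem ne (h : PosDependsVia v i j S) : i ≠ j := by
  rintro rfl
  have hwin := h.1
  rw [insert_idem, h.2.1] at hwin
  exact zero_ne_one hwin

theorem erase (hmono : ∀ S T : Finset α, S ⊆ T → T ⊆ N → v S ≤ v T)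
    (hvals : ∀ S ⊆ N, v S = 0 ∨ v S = 1) (hi : i ∈ N) (hj : j ∈ N) (hSN : S ⊆ N)
    (h : PosDependsVia v i j S) {k : α} (hwin : v (insert i (insert j (S.erase k))) ≠ 0) :
    PosDependsVia v i j (S.erase k) :=
  have hkN : S.erase k ⊆ N := (erase_subset k S).trans hSN
  ⟨(hvals _ (insert_subset hi (insert_subset hj hkN))).resolve_left hwin,
    eq_zero_of_subset_of_eq_zero hmono hvals (insert_subset_insert i (erase_subset k S))
      (insert_subset hi hSN) h.2.1,
    eq_zero_of_subset_of_eq_zero hmono hvals (insert_subset_insert j (erase_subset k S))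
      (insert_subset hj hSN) h.2.2⟩

theorem isMinimalWinning (hmono : ∀ S T : Finset α, S ⊆ T → T ⊆ N → v S ≤ v T)
    (hvals : ∀ S ⊆ N, v S = 0 ∨ v S = 1) (hi : i ∈ N) (hj : j ∈ N) (hS : S ⊆ N \ {i, j})
    (h : PosDependsVia v i j S) (hmin : ∀ S' ⊂ S, ¬ PosDependsVia v i j S') :
    IsMinimalWinning v (insert i (insert j S)) := by
  have hij : i ≠ j := h.ne
  have hiS : i ∉ S := fun hiS => by simpa using hS hiS
  have hjS : j ∉ S := fun hjS => by simpa using hS hjS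
  refine ⟨h.1, fun k hk => ?_⟩
  rcases mem_insert.mp hk with rfl | hk
  · rw [erase_insert (by simp [hij, hiS])]
    exact h.2.2
  rcases mem_insert.mp hk with rfl | hkS
  · rw [erase_insert_of_ne hij, erase_insert hjS]
    exact h.2.1
  · rw [erase_insert_of_ne (ne_of_mem_of_not_mem hkS hiS).symm,
      erase_insert_of_ne (ne_of_mem_of_not_mem hkS hjS).symm]
    by_contra hwin
    exact hmin _ (erase_ssubset hkS)
      (h.erase hmono hvals hi hj (hS.trans sdiff_subset) hwin)

end PosDependsVia

end

theorem posDepends_minimalWinning_general {α : Type*} [DecidableEq α]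
    (N : Finset α) (v : Finset α → ℝ)
    (hmono : ∀ S T : Finset α, S ⊆ T → T ⊆ N → v S ≤ v T)
    (hvals : ∀ S ⊆ N, v S = 0 ∨ v S = 1)
    (i j : α) (hi : i ∈ N) (hj : j ∈ N)
    (hdep : ∃ S ⊆ N \ {i, j},
      v (insert i (insert j S)) = 1 ∧ v (insert i S) = 0 ∧ v (insert j S) = 0) :
    (∃ T ⊆ N, v T = 1 ∧ (∀ k ∈ T, v (T.erase k) = 0) ∧ i ∈ T ∧ j ∈ T) ∧
    (∀ S ⊆ N \ {i, j},
      (v (insert i (insert j S)) = 1 ∧ v (insert i S) = 0 ∧ v (insert j S) = 0) →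
      (∀ S' ⊆ N \ {i, j}, S' ⊂ S →
        ¬ (v (insert i (insert j S')) = 1 ∧ v (insert i S') = 0 ∧
            v (insert j S') = 0)) →
      (v (insert i (insert j S)) = 1 ∧
        ∀ k ∈ insert i (insert j S), v ((insert i (insert j S)).erase k) = 0)) := by
  refine ⟨?_, fun S hS h hmin => PosDependsVia.isMinimalWinning hmono hvals hi hj hS h
    fun S' hS' => hmin S' (hS'.subset.trans hS) hS'⟩
  obtain ⟨S₀, hS₀, h₀⟩ := hdep
  obtain ⟨S, hSS₀, hSmin⟩ := exists_minimal_le_of_wellFoundedLT (PosDependsVia v i j) S₀ h₀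
  have hS : S ⊆ N \ {i, j} := hSS₀.trans hS₀
  obtain ⟨hwin, hlose⟩ := hSmin.prop.isMinimalWinning hmono hvals hi hj hS
    fun _ => hSmin.not_prop_of_lt
  exact ⟨insert i (insert j S),
    Finset.insert_subset hi (Finset.insert_subset hj (hS.trans Finset.sdiff_subset)), hwin, hlose, Finset.mem_insert_self i _,
    Finset.mem_insert_of_mem (Finset.mem_insert_self j S)⟩

/-- If `i` positively depends on `j` in a simple game, then some minimal winning
coalition contains both; moreover for any inclusion-minimal witness `S`,
the coalition `S ∪ {i,j}` is a minimal winning coalition. -/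
theorem posDepends_minimalWinning {α : Type*} [DecidableEq α]
    (N : Finset α) (v : Finset α → ℝ) (hv0 : v ∅ = 0)
    (hmono : ∀ S T : Finset α, S ⊆ T → T ⊆ N → v S ≤ v T)
    (hvals : ∀ S ⊆ N, v S = 0 ∨ v S = 1)
    (i j : α) (hi : i ∈ N) (hj : j ∈ N) (hij : i ≠ j)
    (hdep : ∃ S ⊆ N \ {i, j},
      v (insert i (insert j S)) = 1 ∧ v (insert i S) = 0 ∧ v (insert j S) = 0) :
    (∃ T ⊆ N, v T = 1 ∧ (∀ k ∈ T, v (T.erase k) = 0) ∧ i ∈ T ∧ j ∈ T) ∧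
    (∀ S ⊆ N \ {i, j},
      (v (insert i (insert j S)) = 1 ∧ v (insert i S) = 0 ∧ v (insert j S) = 0) →
      (∀ S' ⊆ N \ {i, j}, S' ⊂ S →
        ¬ (v (insert i (insert j S')) = 1 ∧ v (insert i S') = 0 ∧
            v (insert j S') = 0)) →
      (v (insert i (insert j S)) = 1 ∧
        ∀ k ∈ insert i (insert j S), v ((insert i (insert j S)).erase k) = 0)) :=
  posDepends_minimalWinning_general N v hmono hvals i j hi hj hdep
end

section
/- In any cooperative game (N,v), the characteristic function v is completely determined by the values v(S) for S ⊆ D(i) ∪ {i} together with the dependency structure, in the following sense: for any i ∈ N and any coalition C ⊆ N\{i}, v(C ∪ {i}) − v(C) = v((C ∩ D(i)) ∪ {i}) − v(C ∩ D(i)). -/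
open Finset

section

variable {α : Type*} [DecidableEq α] {N : Finset α} {v : Finset α → ℝ} {i j : α}
  {S T : Finset α}

theorem marginal_insert_eq_of_notMem_depSet (hj : j ∈ N.erase i) (hjD : j ∉ depSet N v i)
    (hS : S ⊆ N \ {i, j}) :
    v (insert i (insert j S)) - v (insert j S) = v (insert i S) - v S := by
  by_contra h
  exact hjD (mem_filter.mpr ⟨hj, S, hS, h⟩)

theorem marginal_union_eq_of_disjoint_depSet (hT : Disjoint T (depSet N v i))
    (hST : S ∪ T ⊆ N.erase i) :
    v (insert i (S ∪ T)) - v (S ∪ T) = v (insert i S) - v S := by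
  induction T using Finset.induction_on with
  | empty => rw [union_empty]
  | insert j T _ ih =>
    rw [union_insert] at hST ⊢
    obtain ⟨hjD, hTD⟩ := disjoint_insert_left.mp hT
    have hST' : S ∪ T ⊆ N.erase i := (subset_insert j _).trans hST
    rw [← ih hTD hST']
    by_cases hjST : j ∈ S ∪ T
    · rw [insert_eq_of_mem hjST]
    · refine marginal_insert_eq_of_notMem_depSet (hST (mem_insert_self j _)) hjD ?_
      intro x hx
      have hxN := mem_erase.mp (hST' hx)
      simp only [mem_sdiff, mem_insert, mem_singleton]
      exact ⟨hxN.2, by rintro (rfl | rfl); exacts [hxN.1 rfl, hjST hx]⟩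

end

theorem marginal_determined_by_depSet_general {α : Type*} [DecidableEq α]
    (N : Finset α) (v : Finset α → ℝ) (i : α)
    (C : Finset α) (hC : C ⊆ N.erase i) :
    v (insert i C) - v C =
      v (insert i (C ∩ depSet N v i)) - v (C ∩ depSet N v i) := by
  have hsplit : C ∩ depSet N v i ∪ C \ depSet N v i = C := sup_inf_sdiff C _
  have h := marginal_union_eq_of_disjoint_depSet sdiff_disjoint (hsplit ▸ hC)
  rwa [hsplit] at h

/-- The marginal contribution of a player to any coalition is determined by the
coalition's intersection with the player's dependency set. -/
theorem marginal_determined_by_depSet {α : Type*} [DecidableEq α]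
    (N : Finset α) (v : Finset α → ℝ) (hv0 : v ∅ = 0) (i : α) (hi : i ∈ N)
    (C : Finset α) (hC : C ⊆ N.erase i) :
    v (insert i C) - v C =
      v (insert i (C ∩ depSet N v i)) - v (C ∩ depSet N v i) :=
  marginal_determined_by_depSet_general N v i C hC
end
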